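/- Let $\Sigma$ be an alphabet with $s \geq 2$ characters, $W$ a word of length $w$, and $0 \leq d < w$. Then $|CN(W,d)| \leq \sum_{i=0}^{d} \binom{w}{i}(s-1)^{d-i} \sum_{j=0}^{d-i} \binom{w-i-1}{j}\binom{w + d - 2i - 2j - 1}{d-i-j}$. -/

import Mathlib

namespace Levenshtein

structure Cost (α β δ : Type*) where
  delete : α → δ
  insert : β → δ
  substitute : α → β → δ

def defaultCost {α : Type*} [DecidableEq α] : Cost α α ℕ where
  delete _ := 1
  insert _ := 1
  substitute a b := if a = b then 0 else 1

def impl {α β δ : Type*} [AddZeroClass δ] [Min δ] (C : Cost α β δ)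
    (xs : List α) (y : β) (d : {r : List δ // 0 < r.length}) : {r : List δ // 0 < r.length} :=
  let ⟨ds, w⟩ := d
  xs.zip (ds.zip ds.tail) |>.foldr
    (init := ⟨[C.insert y + ds.getLast (List.ne_nil_of_length_pos w)], by simp⟩)
    (fun ⟨x, d₀, d₁⟩ ⟨r, w⟩ =>
      ⟨min (C.delete x + r[0]) (min (C.insert y + d₀) (C.substitute x y + d₁)) :: r, by simp⟩)

end Levenshtein

open Levenshtein in
def suffixLevenshtein {α β δ : Type*} [AddZeroClass δ] [Min δ] (C : Cost α β δ)
    (xs : List α) (ys : List β) : {r : List δ // 0 < r.length} :=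
  ys.foldr
    (impl C xs)
    (xs.foldr (init := ⟨[0], by simp⟩) (fun a ⟨r, w⟩ => ⟨(C.delete a + r[0]) :: r, by simp⟩))

open Levenshtein in
def levenshtein {α β δ : Type*} [AddZeroClass δ] [Min δ] (C : Cost α β δ)
    (xs : List α) (ys : List β) : δ :=
  let ⟨r, w⟩ := suffixLevenshtein C xs ys
  r[0]

/-!
Every word `U` of the condensed neighbourhood is produced from `W` by an edit script of cost
exactly `d` with one operation per letter of `W` (delete it, replace it by a different letter, or
insert a block of letters different from it and then copy it) whose last produced letter is a
copied one. A cheapest script is brought into this form by pushing letters to the right; each push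
either succeeds or exhibits a proper prefix of `U` within distance `d`, which minimality forbids.
If the cost were below `d`, dropping the last letter of `U` would stay within distance `d`.

With `t = s - 1`, such scripts are counted by recursion on `W`: the first operation is a deletion,
one of `t` substitutions, or one of `t ^ l` blocks of length `l`. The bound `g n d` of the statement
satisfies `g (n+1) (e+1) + [e = n] t = (t+1) g n e + ∑_{l ≤ e+1} t^l g n (e+1-l)` by Pascal's rule;
the correction term is paid for by the all-deletion script, which a substitution may not precede.
-/

theorem getElem_zero_of_eq_cons {δ : Type*} {l t : List δ} {a : δ} (h : 0 < l.length)
    (e : l = a :: t) : l[0]'h = a := by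
  subst e; rfl

section Recursion

variable {α β δ : Type*} [AddZeroClass δ] [Min δ] {C : Levenshtein.Cost α β δ}

theorem Levenshtein.impl_cons (x : α) (xs : List α) (y : β) (d : δ) (ds : List δ)
    (w : 0 < (d :: ds).length) (w' : 0 < ds.length) :
    (impl C (x :: xs) y ⟨d :: ds, w⟩).1 =
      min (C.delete x + (impl C xs y ⟨ds, w'⟩).1[0]'(impl C xs y ⟨ds, w'⟩).2)
        (min (C.insert y + d) (C.substitute x y + ds[0])) :: (impl C xs y ⟨ds, w'⟩).1 := by
  match ds, w' with
  | _ :: _, _ => rfl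

theorem suffixLevenshtein_cons₁ (x : α) (xs : List α) (ys : List β) :
    suffixLevenshtein C (x :: xs) ys =
      ⟨levenshtein C (x :: xs) ys :: (suffixLevenshtein C xs ys).1, by simp⟩ := by
  induction ys with
  | nil => rfl
  | cons y ys ih =>
    have e : (suffixLevenshtein C (x :: xs) (y :: ys)).1 = _ :=
      (congrArg (fun S => (Levenshtein.impl C (x :: xs) y S).1) ih).trans
        (Levenshtein.impl_cons x xs y _ _ _ (suffixLevenshtein C xs ys).2)
    have hd : levenshtein C (x :: xs) (y :: ys) = _ :=
      getElem_zero_of_eq_cons (suffixLevenshtein C (x :: xs) (y :: ys)).2 e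
    apply Subtype.ext
    rw [e, hd]
    rfl

theorem levenshtein_cons_nil (x : α) (xs : List α) :
    levenshtein C (x :: xs) [] = C.delete x + levenshtein C xs [] := rfl

theorem levenshtein_nil_cons (y : β) (ys : List β) :
    levenshtein C [] (y :: ys) = C.insert y + levenshtein C [] ys := by
  obtain ⟨r, hr⟩ : ∃ r, (suffixLevenshtein C [] ys).1 = [r] := by
    cases ys <;> exact ⟨_, rfl⟩
  change C.insert y + (suffixLevenshtein C [] ys).1.getLast _ = _
  simp only [levenshtein, hr, List.getLast_singleton, List.getElem_cons_zero]

theorem levenshtein_cons_cons (x : α) (xs : List α) (y : β) (ys : List β) :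
    levenshtein C (x :: xs) (y :: ys) =
      min (C.delete x + levenshtein C xs (y :: ys))
        (min (C.insert y + levenshtein C (x :: xs) ys)
          (C.substitute x y + levenshtein C xs ys)) := by
  have e := (congrArg (fun S => (Levenshtein.impl C (x :: xs) y S).1)
    (suffixLevenshtein_cons₁ x xs ys)).trans
      (Levenshtein.impl_cons x xs y _ _ (by simp) (suffixLevenshtein C xs ys).2)
  exact getElem_zero_of_eq_cons
    (Levenshtein.impl C (x :: xs) y (suffixLevenshtein C (x :: xs) ys)).2 e

end Recursion

namespace Levenshtein

variable {α : Type*} [DecidableEq α]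

abbrev lev (X Y : List α) : ℕ := levenshtein defaultCost X Y

theorem lev_nil_right (X : List α) : lev X [] = X.length := by
  induction X with
  | nil => rfl
  | cons a X ih =>
    rw [lev, levenshtein_cons_nil, ← lev, ih, List.length_cons]
    exact add_comm _ _

theorem lev_nil_left (Y : List α) : lev [] Y = Y.length := by
  induction Y with
  | nil => rfl
  | cons b Y ih =>
    rw [lev, levenshtein_nil_cons, ← lev, ih, List.length_cons]
    exact add_comm _ _

theorem lev_cons_cons (a b : α) (X Y : List α) :
    lev (a :: X) (b :: Y) =
      min (1 + lev X (b :: Y)) (min (1 + lev (a :: X) Y) ((if a = b then 0 else 1) + lev X Y)) :=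
  levenshtein_cons_cons a X b Y

theorem lev_cons_left_le (a : α) (X Y : List α) : lev (a :: X) Y ≤ lev X Y + 1 := by
  cases Y with
  | nil => simp only [lev_nil_right, List.length_cons, le_refl]
  | cons b Y => have := lev_cons_cons a b X Y; omega

theorem lev_cons_right_le (b : α) (X Y : List α) : lev X (b :: Y) ≤ lev X Y + 1 := by
  cases X with
  | nil => simp only [lev_nil_left, List.length_cons, le_refl]
  | cons a X => have := lev_cons_cons a b X Y; omega

theorem lev_cons_cons_le (a b : α) (X Y : List α) : lev (a :: X) (b :: Y) ≤ lev X Y + 1 := by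
  have := lev_cons_cons a b X Y
  split_ifs at this <;> omega

theorem lev_le_lev_cons_left (a : α) (X Y : List α) : lev X Y ≤ lev (a :: X) Y + 1 := by
  induction Y generalizing X with
  | nil => simp only [lev_nil_right, List.length_cons]; omega
  | cons b Y ih =>
    have := lev_cons_cons a b X Y
    have := lev_cons_right_le b X Y
    have := ih X
    split_ifs at * <;> omega

theorem lev_le_lev_cons_right (b : α) (X Y : List α) : lev X Y ≤ lev X (b :: Y) + 1 := by
  induction X generalizing Y with
  | nil => simp only [lev_nil_left, List.length_cons]; omega
  | cons a X ih =>
    have := lev_cons_cons a b X Y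
    have := lev_cons_left_le a X Y
    have := ih Y
    split_ifs at * <;> omega

@[simp]
theorem lev_cons_cons_self (a : α) (X Y : List α) : lev (a :: X) (a :: Y) = lev X Y := by
  have := lev_cons_cons a a X Y
  have := lev_le_lev_cons_left a X Y
  have := lev_le_lev_cons_right a X Y
  simp only [if_true, zero_add] at *
  omega

theorem lev_append_left_le (A X Y : List α) : lev (A ++ X) Y ≤ lev X Y + A.length := by
  induction A with
  | nil => simp
  | cons a A ih =>
    have := lev_cons_left_le a (A ++ X) Y
    simp only [List.cons_append, List.length_cons]
    omega

theorem length_le_lev_add_length (X Y : List α) : Y.length ≤ lev X Y + X.length := by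
  induction X generalizing Y with
  | nil => simp [lev_nil_left]
  | cons a X ih =>
    cases Y with
    | nil => simp
    | cons b Y =>
      have := lev_cons_cons a b X Y
      have := ih (b :: Y)
      have := ih Y
      have := lev_le_lev_cons_left a X Y
      simp only [List.length_cons] at *
      split_ifs at * <;> omega

theorem lev_le_lev_concat (c : α) : ∀ U W : List α, lev U W ≤ lev (U ++ [c]) W + 1
  | [], W => by simpa [lev_nil_left] using length_le_lev_add_length [c] W
  | a :: U, [] => by simp [lev_nil_right]
  | a :: U, b :: W => by
    have := lev_cons_cons a b (U ++ [c]) W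
    have := lev_le_lev_concat c U (b :: W)
    have := lev_le_lev_concat c (a :: U) W
    have := lev_le_lev_concat c U W
    have := lev_cons_left_le a U (b :: W)
    have := lev_cons_right_le b (a :: U) W
    have := lev_cons_cons a b U W
    simp only [List.cons_append] at *
    split_ifs at * <;> omega
termination_by U W => U.length + W.length

theorem lev_dropLast_le (U W : List α) : lev U.dropLast W ≤ lev U W + 1 := by
  rcases List.eq_nil_or_concat U with rfl | ⟨V, c, rfl⟩
  · simp
  · simpa using lev_le_lev_concat c V W

/-- An edit script turning `W` into another word, one operation per letter of `W`: `del` deletes the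
letter, `sub c` replaces it by `c`, and `keep ins` inserts the block `ins` and then copies the
letter. -/
inductive EditOp (α : Type*) where
  | del : EditOp α
  | sub : α → EditOp α
  | keep : List α → EditOp α
deriving DecidableEq

abbrev EditScript (α : Type*) := List (EditOp α)

namespace EditScript

variable {α : Type*}

def run : List α → EditScript α → List α
  | _, [] => []
  | [], _ => []
  | _ :: W, .del :: T => run W T
  | _ :: W, .sub c :: T => c :: run W T
  | x :: W, .keep ins :: T => ins ++ x :: run W T

def cost : EditScript α → ℕ
  | [] => 0
  | .del :: T => cost T + 1
  | .sub _ :: T => cost T + 1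
  | .keep ins :: T => cost T + ins.length

/-- These constraints leave `card α - 1` choices for each substituted or inserted letter. -/
inductive Valid : List α → EditScript α → Prop
  | nil : Valid [] []
  | del {x W T} : Valid W T → Valid (x :: W) (.del :: T)
  | sub {x c W T} : c ≠ x → Valid W T → Valid (x :: W) (.sub c :: T)
  | keep {x ins W T} : (∀ c ∈ ins, c ≠ x) → Valid W T → Valid (x :: W) (.keep ins :: T)

def AllDel (T : EditScript α) : Prop := ∀ t ∈ T, t = .del

instance [DecidableEq α] (T : EditScript α) : Decidable (AllDel T) :=
  inferInstanceAs (Decidable (∀ t ∈ T, t = .del))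

/-- The last letter produced, if any, is a copied letter of `W`. -/
def NoFinalSub : EditScript α → Prop
  | [] => True
  | .del :: T => NoFinalSub T
  | .sub _ :: T => NoFinalSub T ∧ ¬ AllDel T
  | .keep _ :: T => NoFinalSub T

theorem run_eq_nil_of_allDel (W : List α) {T : EditScript α} (h : AllDel T) : run W T = [] := by
  induction T generalizing W with
  | nil => cases W <;> rfl
  | cons t T ih =>
    obtain rfl : t = .del := h t List.mem_cons_self
    cases W with
    | nil => rfl
    | cons x W => exact ih W fun t ht => h t (List.mem_cons_of_mem _ ht)

theorem not_allDel_of_run_ne_nil {W : List α} {T : EditScript α} (h : run W T ≠ []) :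
    ¬ AllDel T :=
  fun hT => h (run_eq_nil_of_allDel W hT)

def deleteAll (W : List α) : EditScript α := List.replicate W.length .del

theorem allDel_deleteAll (W : List α) : AllDel (deleteAll W) :=
  fun _ => List.eq_of_mem_replicate

theorem valid_deleteAll (W : List α) : Valid W (deleteAll W) := by
  induction W with
  | nil => exact .nil
  | cons x W ih => exact .del ih

theorem noFinalSub_deleteAll (W : List α) : NoFinalSub (deleteAll W) := by
  induction W with
  | nil => trivial
  | cons x W ih => exact ih

theorem cost_deleteAll (W : List α) : cost (deleteAll W) = W.length := by
  induction W with
  | nil => rfl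
  | cons x W ih => exact congrArg (· + 1) ih

variable [DecidableEq α]

theorem lev_run_le_cost {W : List α} {T : EditScript α} (h : Valid W T) :
    lev (run W T) W ≤ cost T := by
  induction h with
  | nil => rfl
  | @del x W T _ ih => have := lev_cons_right_le x (run W T) W; simp only [run, cost]; omega
  | @sub x c W T _ _ ih => have := lev_cons_cons_le c x (run W T) W; simp only [run, cost]; omega
  | @keep x ins W T _ _ ih =>
    have := lev_append_left_le ins (x :: run W T) (x :: W)
    simp only [run, cost, lev_cons_cons_self] at *
    omega

end EditScript

open EditScript

variable {α : Type*}

def HasNormalScript (W U : List α) (k : ℕ) : Prop :=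
  ∃ T, Valid W T ∧ NoFinalSub T ∧ run W T = U ∧ cost T ≤ k

theorem HasNormalScript.mono {W U : List α} {k k' : ℕ} (h : HasNormalScript W U k)
    (hk : k ≤ k') : HasNormalScript W U k' :=
  let ⟨T, hT, hE, hU, hc⟩ := h
  ⟨T, hT, hE, hU, hc.trans hk⟩

variable [DecidableEq α]

def HasProperPrefixBelow (W U : List α) (k : ℕ) : Prop :=
  ∃ P, P <+: U ∧ P ≠ U ∧ lev P W < k

theorem HasProperPrefixBelow.imp {W W' U : List α} {k k' : ℕ} (h : HasProperPrefixBelow W U k)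
    (hlev : ∀ P, lev P W < k → lev P W' < k') : HasProperPrefixBelow W' U k' :=
  let ⟨P, hP, hne, hl⟩ := h
  ⟨P, hP, hne, hlev P hl⟩

theorem HasProperPrefixBelow.append_left (A : List α) {W W' U : List α} {k k' : ℕ}
    (h : HasProperPrefixBelow W U k) (hlev : ∀ P, lev P W < k → lev (A ++ P) W' < k') :
    HasProperPrefixBelow W' (A ++ U) k' :=
  let ⟨P, hP, hne, hl⟩ := h
  ⟨A ++ P, (List.prefix_append_right_inj A).2 hP, fun e => hne (List.append_cancel_left e),
    hlev P hl⟩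

theorem HasProperPrefixBelow.cons (a : α) {W W' U : List α} {k k' : ℕ}
    (h : HasProperPrefixBelow W U k) (hlev : ∀ P, lev P W < k → lev (a :: P) W' < k') :
    HasProperPrefixBelow W' (a :: U) k' :=
  h.append_left [a] hlev

theorem EditScript.Valid.prepend {W : List α} {T : EditScript α} (hT : Valid W T)
    (hE : NoFinalSub T) (cs : List α) :
    HasNormalScript W (cs ++ run W T) (cost T + cs.length) ∨
      HasProperPrefixBelow W (cs ++ run W T) (cost T + cs.length) := by
  induction hT generalizing cs with
  | nil =>
    cases cs with
    | nil => exact .inl ⟨[], .nil, trivial, rfl, le_rfl⟩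
    | cons c cs =>
      refine .inr ⟨(c :: cs).dropLast, by simpa [run] using List.dropLast_prefix (c :: cs),
        fun e => by simpa [run] using congrArg List.length e, ?_⟩
      simp [lev_nil_right, cost]
  | @del x W T hT ih =>
    simp only [run, cost]
    rcases ih hE cs with ⟨T', hT', hE', hrun, hc⟩ | h
    · exact .inl ⟨.del :: T', .del hT', hE', hrun, by simp only [cost]; omega⟩
    · exact .inr (h.imp fun P hP => by have := lev_cons_right_le x P W; omega)
  | @sub x c W T hc hT ih =>
    obtain ⟨hE, hT_ne⟩ := hE
    cases cs with
    | nil => exact .inl ⟨.sub c :: T, .sub hc hT, ⟨hE, hT_ne⟩, rfl, le_rfl⟩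
    | cons c₁ cs =>
      -- `c₁` is copied if it is `x` and substituted for `x` otherwise; `c` moves to the right.
      have hrun : c₁ :: cs ++ run (x :: W) (.sub c :: T) = c₁ :: ((cs ++ [c]) ++ run W T) := by
        simp [run]
      simp only [hrun, cost, List.length_cons]
      rcases ih hE (cs ++ [c]) with ⟨T', hT', hE', hrun', hc'⟩ | h
      · rw [List.length_append, List.length_singleton] at hc'
        by_cases hx : c₁ = x
        · subst hx
          exact .inl ⟨.keep [] :: T', .keep (by simp) hT', hE', by simp [run, hrun'],
            by simp only [cost, List.length_nil]; omega⟩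
        · have hT'_ne : ¬ AllDel T' := not_allDel_of_run_ne_nil (W := W) (by simp [hrun'])
          exact .inl ⟨.sub c₁ :: T', .sub hx hT', ⟨hE', hT'_ne⟩, by simp [run, hrun'],
            by simp only [cost]; omega⟩
      · refine .inr (h.cons c₁ fun P hP => ?_)
        have := lev_cons_cons_le c₁ x P W
        rw [List.length_append, List.length_singleton] at hP
        omega
  | @keep x ins W T hins hT ih =>
    by_cases hx : x ∈ cs
    -- The first `x` of `cs` becomes the copy of `x`; what follows it and `ins` move to the right.
    · obtain ⟨A, B, rfl, hA⟩ := List.eq_append_cons_of_mem hx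
      have hrun : A ++ x :: B ++ run (x :: W) (.keep ins :: T) =
          (A ++ [x]) ++ ((B ++ ins ++ [x]) ++ run W T) := by
        simp [run]
      simp only [hrun, cost, List.length_append, List.length_cons]
      rcases ih hE (B ++ ins ++ [x]) with ⟨T', hT', hE', hrun', hc'⟩ | h
      · refine .inl ⟨.keep A :: T', .keep (fun c hc e => hA (e ▸ hc)) hT', hE',
          by simp [run, hrun'], ?_⟩
        simp only [cost, List.length_append, List.length_cons, List.length_nil] at *
        omega
      · refine .inr (h.append_left _ fun P hP => ?_)
        have := lev_append_left_le A (x :: P) (x :: W)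
        simp only [List.append_assoc, List.singleton_append, lev_cons_cons_self, List.length_append,
          List.length_cons, List.length_nil] at *
        omega
    · refine .inl ⟨.keep (cs ++ ins) :: T, .keep ?_ hT, hE, by simp [run],
        by simp [cost]; omega⟩
      rintro c hc rfl
      exact (List.mem_append.1 hc).elim hx (hins c · rfl)

theorem hasNormalScript_or_hasProperPrefixBelow :
    ∀ U W : List α, HasNormalScript W U (lev U W) ∨ HasProperPrefixBelow W U (lev U W + 1)
  | [], W => .inl ⟨deleteAll W, valid_deleteAll W, noFinalSub_deleteAll W,
      run_eq_nil_of_allDel W (allDel_deleteAll W), by rw [cost_deleteAll, lev_nil_left]⟩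
  | a :: U, [] =>
    .inr ⟨[], List.nil_prefix, (List.cons_ne_nil a U).symm, by simp [lev_nil_left]⟩
  | a :: U, b :: W => by
    by_cases hab : a = b
    · subst hab
      rw [lev_cons_cons_self]
      rcases hasNormalScript_or_hasProperPrefixBelow U W with ⟨T, hT, hE, rfl, hc⟩ | h
      · exact .inl ⟨.keep [] :: T, .keep (by simp) hT, hE, rfl, by simpa [cost] using hc⟩
      · exact .inr (h.cons a fun P hP => by rwa [lev_cons_cons_self])
    have hlev := lev_cons_cons a b U W
    rw [if_neg hab] at hlev
    obtain hins | hdel | hsub : lev (a :: U) (b :: W) = lev U (b :: W) + 1 ∨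
        lev (a :: U) (b :: W) = lev (a :: U) W + 1 ∨
        lev (a :: U) (b :: W) = lev U W + 1 := by omega
    · rw [hins]
      rcases hasNormalScript_or_hasProperPrefixBelow U (b :: W) with ⟨T, hT, hE, rfl, hc⟩ | h
      · rcases hT.prepend hE [a] with h' | h'
        · exact .inl (h'.mono (by simpa using hc))
        · exact .inr (h'.imp fun P hP => by simp at hP; omega)
      · exact .inr (h.cons a fun P hP => by have := lev_cons_left_le a P (b :: W); omega)
    · rw [hdel]
      rcases hasNormalScript_or_hasProperPrefixBelow (a :: U) W with ⟨T, hT, hE, hrun, hc⟩ | h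
      · exact .inl ⟨.del :: T, .del hT, hE, hrun, by simpa [cost] using hc⟩
      · exact .inr (h.imp fun P hP => by have := lev_cons_right_le b P W; omega)
    · rw [hsub]
      rcases hasNormalScript_or_hasProperPrefixBelow U W with ⟨T, hT, hE, rfl, hc⟩ | h
      · by_cases hU : run W T = []
        · refine .inr ⟨[], List.nil_prefix, (List.cons_ne_nil _ _).symm, ?_⟩
          simp [hU, lev_nil_left]
        · exact .inl ⟨.sub a :: T, .sub hab hT, ⟨hE, not_allDel_of_run_ne_nil hU⟩, rfl,
            by simpa [cost] using hc⟩
      · exact .inr (h.cons a fun P hP => by have := lev_cons_cons_le a b P W; omega)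
termination_by U W => U.length + W.length

def condensedNeighborhood (W : List α) (d : ℕ) : Set (List α) :=
  {U | lev U W ≤ d ∧ ∀ P, P <+: U → P ≠ U → ¬ lev P W ≤ d}

theorem exists_normalScript_of_mem_condensedNeighborhood {W U : List α} {d : ℕ}
    (hdw : d < W.length) (hU : U ∈ condensedNeighborhood W d) :
    ∃ T, Valid W T ∧ NoFinalSub T ∧ run W T = U ∧ cost T = d := by
  obtain ⟨hUd, hmin⟩ := hU
  rcases hasNormalScript_or_hasProperPrefixBelow U W with
    ⟨T, hT, hE, hrun, hc⟩ | ⟨P, hP, hne, hl⟩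
  · refine ⟨T, hT, hE, hrun, ?_⟩
    have hsound := lev_run_le_cost hT
    rw [hrun] at hsound
    suffices lev U W = d by omega
    by_contra hlt
    have hU_ne : U ≠ [] := by rintro rfl; rw [lev_nil_left] at hUd; omega
    refine hmin _ (List.dropLast_prefix U) (fun e => ?_) ?_
    · have := congrArg List.length e
      rw [List.length_dropLast] at this
      have := List.length_pos_of_ne_nil hU_ne
      omega
    · have := lev_dropLast_le U W; omega
  · exact absurd (by omega) (hmin P hP hne)

open Finset

def cnInner (n d i : ℕ) : ℕ :=
  ∑ j ∈ range (d - i + 1), (n - i - 1).choose j * (n + d - 2 * i - 2 * j - 1).choose (d - i - j)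

def cnInnerA (n d i : ℕ) : ℕ :=
  ∑ j ∈ range (d - i + 1), (n - i).choose j * (n + d - 2 * i - 2 * j).choose (d - i - j)

def cnInnerB (n d i : ℕ) : ℕ :=
  ∑ j ∈ range (d - i + 1), (n - i - 1).choose j * (n + d - 2 * i - 2 * j).choose (d - i - j)

def cnBound (t n d : ℕ) : ℕ := ∑ i ∈ range (d + 1), n.choose i * t ^ (d - i) * cnInner n d i

def cnBoundA (t n d : ℕ) : ℕ :=
  ∑ i ∈ range (d + 1), n.choose i * t ^ (d - i) * cnInnerA n d i

def cnBoundB (t n d : ℕ) : ℕ :=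
  ∑ i ∈ range (d + 1), n.choose i * t ^ (d - i) * cnInnerB n d i

@[simp] theorem cnInner_self (n d : ℕ) : cnInner n d d = 1 := by simp [cnInner]

@[simp] theorem cnInnerA_self (n d : ℕ) : cnInnerA n d d = 1 := by simp [cnInnerA]

@[simp] theorem cnInnerB_self (n d : ℕ) : cnInnerB n d d = 1 := by simp [cnInnerB]

@[simp] theorem cnBound_zero_right (t n : ℕ) : cnBound t n 0 = 1 := by simp [cnBound]

theorem cnInnerA_self_left (n d : ℕ) : cnInnerA n d n = 1 := by
  rw [cnInnerA, sum_eq_single 0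
    (fun j _ hj => by simp [Nat.choose_eq_zero_of_lt (by omega : 0 < j)]) (by simp)]
  simp [show n + d - 2 * n = d - n by omega]

theorem cnInnerB_self_left (n d : ℕ) : cnInnerB n d n = 1 := by
  rw [cnInnerB, sum_eq_single 0
    (fun j _ hj => by simp [Nat.choose_eq_zero_of_lt (by omega : 0 < j)]) (by simp)]
  simp [show n + d - 2 * n = d - n by omega]

theorem cnInner_self_left {n d : ℕ} (h : n ≤ d) : cnInner n d n = if d = n then 1 else 0 := by
  rw [cnInner, sum_eq_single 0
    (fun j _ hj => by simp [Nat.choose_eq_zero_of_lt (by omega : 0 < j)]) (by simp)]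
  split_ifs with hd
  · simp [hd]
  · simp [Nat.choose_eq_zero_of_lt (by omega : n + d - 2 * n - 1 < d - n)]

theorem cnInner_succ_left (n d i : ℕ) : cnInner (n + 1) d i = cnInnerA n d i := by
  refine sum_congr rfl fun j _ => ?_
  rw [show n + 1 - i - 1 = n - i by omega,
    show n + 1 + d - 2 * i - 2 * j - 1 = n + d - 2 * i - 2 * j by omega]

theorem cnInnerA_succ_succ (n e i : ℕ) : cnInnerA n (e + 1) (i + 1) = cnInner n e i := by
  rw [cnInnerA, cnInner, show e + 1 - (i + 1) = e - i by omega]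
  refine sum_congr rfl fun j _ => ?_
  rw [show n - (i + 1) = n - i - 1 by omega,
    show n + (e + 1) - 2 * (i + 1) - 2 * j = n + e - 2 * i - 2 * j - 1 by omega]

theorem cnBound_succ_succ (t n e : ℕ) :
    cnBound t (n + 1) (e + 1) = cnBound t n e + cnBoundA t n (e + 1) := by
  have hshift : cnBound t n e =
      ∑ i ∈ range (e + 1), n.choose i * t ^ (e + 1 - (i + 1)) * cnInnerA n (e + 1) (i + 1) :=
    sum_congr rfl fun i _ => by rw [cnInnerA_succ_succ, Nat.add_sub_add_right]
  rw [cnBound, cnBoundA, sum_range_succ', sum_range_succ' _ (e + 1), hshift]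
  simp only [cnInner_succ_left, Nat.choose_succ_succ', add_mul, sum_add_distrib,
    Nat.choose_zero_right]
  ring

theorem cnInnerB_succ {n e i : ℕ} (hie : i ≤ e) (hin : i ≤ n) :
    cnInnerB n (e + 1) i = cnInner n (e + 1) i + cnInnerB n e i := by
  rw [cnInnerB, cnInner, cnInnerB, show e + 1 - i + 1 = e - i + 1 + 1 by omega,
    sum_range_succ _ (e - i + 1), sum_range_succ _ (e - i + 1),
    show e + 1 - i - (e - i + 1) = 0 by omega, Nat.choose_zero_right, Nat.choose_zero_right,
    add_right_comm, ← sum_add_distrib]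
  congr 1
  refine sum_congr rfl fun j hj => ?_
  rw [mem_range] at hj
  by_cases hj' : j ≤ n - i - 1
  · rw [Nat.choose_eq_choose_pred_add (by omega) (by omega : 0 < e + 1 - i - j),
      show n + (e + 1) - 2 * i - 2 * j - 1 = n + e - 2 * i - 2 * j by omega,
      show e + 1 - i - j - 1 = e - i - j by omega]
    ring
  · simp [Nat.choose_eq_zero_of_lt (by omega : n - i - 1 < j)]

theorem cnBoundB_succ (t n e : ℕ) :
    cnBoundB t n (e + 1) = cnBound t n (e + 1) + t * cnBoundB t n e := by
  rw [cnBoundB, cnBound, sum_range_succ, sum_range_succ _ (e + 1), cnInnerB_self, cnInner_self,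
    add_right_comm, cnBoundB, mul_sum, ← sum_add_distrib]
  congr 1
  refine sum_congr rfl fun i hi => ?_
  rw [mem_range] at hi
  by_cases hin : i ≤ n
  · rw [cnInnerB_succ (by omega) hin, show e + 1 - i = e - i + 1 by omega, pow_succ]
    ring
  · simp [Nat.choose_eq_zero_of_lt (by omega : n < i)]

theorem cnBoundB_eq_sum (t n d : ℕ) :
    cnBoundB t n d = ∑ l ∈ range (d + 1), t ^ l * cnBound t n (d - l) := by
  induction d with
  | zero => simp [cnBoundB, cnInnerB]
  | succ e ih =>
    rw [cnBoundB_succ, ih, sum_range_succ' _ (e + 1), mul_sum]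
    simp only [Nat.add_sub_add_right, pow_succ, pow_zero, one_mul, Nat.sub_zero]
    rw [add_comm]
    congr 1
    exact sum_congr rfl fun l _ => by ring

theorem cnInnerA_succ {n e i : ℕ} (hie : i ≤ e) (hin : i < n) :
    cnInnerA n (e + 1) i = cnInnerB n (e + 1) i + cnInner n e i := by
  rw [cnInnerA, cnInnerB, show e + 1 - i + 1 = e - i + 1 + 1 by omega,
    sum_range_succ' _ (e - i + 1), sum_range_succ' _ (e - i + 1), cnInner, Nat.choose_zero_right,
    Nat.choose_zero_right, add_right_comm, ← sum_add_distrib]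
  congr 1
  refine sum_congr rfl fun j _ => ?_
  rw [Nat.choose_eq_choose_pred_add (by omega : 0 < n - i) j.succ_pos, Nat.succ_sub_one,
    show n + (e + 1) - 2 * i - 2 * (j + 1) = n + e - 2 * i - 2 * j - 1 by omega,
    show e + 1 - i - (j + 1) = e - i - j by omega]
  ring

theorem cnBoundA_succ (t n e : ℕ) :
    cnBoundA t n (e + 1) + (if e = n then t else 0) = cnBoundB t n (e + 1) + t * cnBound t n e := by
  have hcorr : (if e = n then t else 0) =
      ∑ i ∈ range (e + 1), if i = n then (if e = n then t else 0) else 0 := by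
    rw [sum_ite_eq']
    split_ifs with h h' <;> simp_all
  rw [cnBoundA, cnBoundB, sum_range_succ, sum_range_succ _ (e + 1), cnInnerA_self, cnInnerB_self,
    hcorr, cnBound, mul_sum, add_right_comm, ← sum_add_distrib,
    add_right_comm _ _ (∑ i ∈ _, _),
    ← sum_add_distrib]
  congr 1
  refine sum_congr rfl fun i hi => ?_
  rw [mem_range] at hi
  rcases lt_trichotomy i n with hlt | rfl | hgt
  · rw [cnInnerA_succ (by omega) hlt, if_neg hlt.ne, show e + 1 - i = e - i + 1 by omega, pow_succ]
    ring
  · rw [cnInnerA_self_left, cnInnerB_self_left, cnInner_self_left (by omega), if_pos rfl]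
    split_ifs with he
    · subst he; simp
    · ring
  · simp [Nat.choose_eq_zero_of_lt hgt, hgt.ne']

theorem cnBound_succ_succ_add (t n e : ℕ) :
    cnBound t (n + 1) (e + 1) + (if e = n then t else 0) =
      (t + 1) * cnBound t n e + ∑ l ∈ range (e + 2), t ^ l * cnBound t n (e + 1 - l) := by
  rw [cnBound_succ_succ, add_assoc, cnBoundA_succ, cnBoundB_eq_sum]
  ring

namespace EditScript

open Finset

variable {α : Type*} [DecidableEq α] [Fintype α]

def blocks (x : α) (l : ℕ) : Finset (List α) :=
  univ.image fun f : Fin l → {c // c ≠ x} => List.ofFn fun i => (f i).1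

theorem card_blocks_le (x : α) (l : ℕ) : #(blocks x l) ≤ (Fintype.card α - 1) ^ l := by
  refine card_image_le.trans_eq ?_
  simp [Fintype.card_subtype_compl]

theorem mem_blocks {x : α} {ins : List α} (h : ∀ c ∈ ins, c ≠ x) :
    ins ∈ blocks x ins.length :=
  mem_image.2 ⟨fun i => ⟨ins[i], h _ (List.getElem_mem _)⟩, mem_univ _, List.ofFn_getElem⟩

def candidates : List α → ℕ → Finset (EditScript α)
  | [], d => if d = 0 then {[]} else ∅
  | _ :: W, 0 => (candidates W 0).image (.keep [] :: ·)
  | x :: W, d + 1 =>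
      (candidates W d).image (.del :: ·) ∪
      ((candidates W d).filter (¬ AllDel ·)).biUnion
        (fun T => (univ.filter (· ≠ x)).image (.sub · :: T)) ∪
      (range (d + 2)).biUnion
        (fun l => (blocks x l ×ˢ candidates W (d + 1 - l)).image fun p => .keep p.1 :: p.2)

theorem del_mem_candidates {x : α} {W : List α} {T : EditScript α} {d : ℕ}
    (h : T ∈ candidates W d) : .del :: T ∈ candidates (x :: W) (d + 1) := by
  simp only [candidates, mem_union]
  exact .inl (.inl (mem_image_of_mem _ h))

theorem sub_mem_candidates {x c : α} {W : List α} {T : EditScript α} {d : ℕ}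
    (h : T ∈ candidates W d) (hT : ¬ AllDel T) (hc : c ≠ x) :
    .sub c :: T ∈ candidates (x :: W) (d + 1) := by
  simp only [candidates, mem_union]
  exact .inl (.inr (mem_biUnion.2
    ⟨T, mem_filter.2 ⟨h, hT⟩, mem_image_of_mem _ (by simpa using hc)⟩))

theorem keep_mem_candidates {x : α} {W ins : List α} {T : EditScript α} {d : ℕ}
    (h : T ∈ candidates W d) (hins : ∀ c ∈ ins, c ≠ x) :
    .keep ins :: T ∈ candidates (x :: W) (d + ins.length) := by
  cases hd : d + ins.length with
  | zero =>
    obtain ⟨rfl, rfl⟩ : d = 0 ∧ ins = [] := by simpa using hd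
    exact mem_image_of_mem _ h
  | succ e =>
    simp only [candidates, mem_union]
    refine .inr (mem_biUnion.2 ⟨ins.length, mem_range.2 (by omega),
      mem_image.2 ⟨(ins, T), mem_product.2 ⟨mem_blocks hins, ?_⟩, rfl⟩⟩)
    rwa [show e + 1 - ins.length = d by omega]

theorem mem_candidates {W : List α} {T : EditScript α} (hT : Valid W T) (hE : NoFinalSub T) :
    T ∈ candidates W (cost T) := by
  induction hT with
  | nil => simp [candidates, cost]
  | del _ ih => exact del_mem_candidates (ih hE)
  | sub hc _ ih => exact sub_mem_candidates (ih hE.1) hE.2 hc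
  | keep hins _ ih => exact keep_mem_candidates (ih hE) hins

theorem card_candidates_cons_succ_le (x : α) (W : List α) (d : ℕ) :
    #(candidates (x :: W) (d + 1)) ≤
      #(candidates W d) + #((candidates W d).filter (¬ AllDel ·)) * (Fintype.card α - 1) +
        ∑ l ∈ range (d + 2), (Fintype.card α - 1) ^ l * #(candidates W (d + 1 - l)) := by
  rw [candidates]
  refine (card_union_le _ _).trans (add_le_add ((card_union_le _ _).trans
    (add_le_add card_image_le ?_)) ?_)
  · refine card_biUnion_le.trans
      ((sum_le_card_nsmul _ _ _ fun T _ => ?_).trans_eq (smul_eq_mul _ _))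
    refine card_image_le.trans_eq ?_
    rw [filter_ne', card_erase_of_mem (mem_univ x), card_univ]
  · refine card_biUnion_le.trans (sum_le_sum fun l _ => card_image_le.trans ?_)
    rw [card_product]
    exact Nat.mul_le_mul_right _ (card_blocks_le x l)

theorem card_filter_not_allDel_add_le (W : List α) (d : ℕ) :
    #((candidates W d).filter (¬ AllDel ·)) + (if d = W.length then 1 else 0) ≤
      #(candidates W d) := by
  split_ifs with hd
  · have hmem := mem_candidates (valid_deleteAll W) (noFinalSub_deleteAll W)
    rw [cost_deleteAll, ← hd] at hmem
    exact card_lt_card (filter_ssubset.2 ⟨_, hmem, not_not.2 (allDel_deleteAll W)⟩)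
  · exact card_filter_le _ _

theorem card_candidates_le (W : List α) (d : ℕ) :
    #(candidates W d) ≤ cnBound (Fintype.card α - 1) W.length d := by
  induction W generalizing d with
  | nil => cases d <;> simp [candidates]
  | cons x W ih =>
    cases d with
    | zero => simpa [candidates] using card_image_le.trans (ih 0)
    | succ e =>
      set t := Fintype.card α - 1
      have hrec := cnBound_succ_succ_add t W.length e
      have hcand := card_candidates_cons_succ_le x W e
      have hsub := Nat.mul_le_mul_right t ((card_filter_not_allDel_add_le W e).trans (ih e))
      have hkeep : ∑ l ∈ range (e + 2), t ^ l * #(candidates W (e + 1 - l)) ≤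
          ∑ l ∈ range (e + 2), t ^ l * cnBound t W.length (e + 1 - l) :=
        sum_le_sum fun l _ => Nat.mul_le_mul_left _ (ih _)
      have hdel := ih e
      rw [List.length_cons]
      split_ifs at hrec hsub <;> linarith

end EditScript

open EditScript Finset

variable {α : Type*} [DecidableEq α] [Fintype α]

theorem condensedNeighborhood_subset_image_run {W : List α} {d : ℕ} (hdw : d < W.length) :
    condensedNeighborhood W d ⊆ (candidates W d).image (run W) := by
  intro U hU
  obtain ⟨T, hT, hE, rfl, rfl⟩ := exists_normalScript_of_mem_condensedNeighborhood hdw hU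
  exact mem_coe.2 (mem_image_of_mem _ (mem_candidates hT hE))

theorem ncard_condensedNeighborhood_le {W : List α} {d : ℕ} (hdw : d < W.length) :
    (condensedNeighborhood W d).ncard ≤ cnBound (Fintype.card α - 1) W.length d :=
  calc (condensedNeighborhood W d).ncard
    _ ≤ #((candidates W d).image (run W)) := by
      rw [← Set.ncard_coe_finset]
      exact Set.ncard_le_ncard (condensedNeighborhood_subset_image_run hdw) (finite_toSet _)
    _ ≤ #(candidates W d) := card_image_le
    _ ≤ cnBound (Fintype.card α - 1) W.length d := card_candidates_le W d

end Levenshtein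

theorem stmt_15_general {α : Type*} [Fintype α] [DecidableEq α] (s : ℕ)
    (hcard : Fintype.card α = s)
    (W : List α) (w d : ℕ) (hw : W.length = w) (hdw : d < w) :
    {U : List α | levenshtein Levenshtein.defaultCost U W ≤ d ∧
        ∀ P : List α, P <+: U → P ≠ U →
          ¬ levenshtein Levenshtein.defaultCost P W ≤ d}.ncard
      ≤ ∑ i ∈ Finset.range (d + 1), Nat.choose w i * (s - 1) ^ (d - i) *
          ∑ j ∈ Finset.range (d - i + 1),
            Nat.choose (w - i - 1) j * Nat.choose (w + d - 2 * i - 2 * j - 1) (d - i - j) := by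
  subst hcard hw
  exact Levenshtein.ncard_condensedNeighborhood_le hdw

theorem stmt_15 {α : Type*} [Fintype α] [DecidableEq α] (s : ℕ)
    (hcard : Fintype.card α = s) (hs : 2 ≤ s)
    (W : List α) (w d : ℕ) (hw : W.length = w) (hdw : d < w) :
    {U : List α | levenshtein Levenshtein.defaultCost U W ≤ d ∧
        ∀ P : List α, P <+: U → P ≠ U →
          ¬ levenshtein Levenshtein.defaultCost P W ≤ d}.ncard
      ≤ ∑ i ∈ Finset.range (d + 1), Nat.choose w i * (s - 1) ^ (d - i) *
          ∑ j ∈ Finset.range (d - i + 1),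
            Nat.choose (w - i - 1) j * Nat.choose (w + d - 2 * i - 2 * j - 1) (d - i - j) :=
  stmt_15_general s hcard W w d hw hdw
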